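/- arXiv:1805.11699 — 2 statements merged into one kernel-verified Lean document; each statement's English description precedes it below -/
import Mathlib

section
/- Let P0, P1 be symmetric positive definite and Q = I - P0^{-1/2} (P0^{1/2} P1 P0^{1/2})^{1/2} P0^{-1/2}. Then trace(Q P0 Q) = ||P0^{1/2} - P1^{1/2} U||_F^2 where U = P1^{-1/2} P0^{-1/2} (P0^{1/2} P1 P0^{1/2})^{1/2}. -/
open Matrix

/-- The symmetric positive definite square root of a positive definite matrix. -/
noncomputable def sqrtm {n : ℕ} {P : Matrix (Fin n) (Fin n) ℝ} (hP : P.PosDef) :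
    Matrix (Fin n) (Fin n) ℝ :=
  hP.posSemidef.1.eigenvectorUnitary.1 * diagonal ((↑) ∘ (√·) ∘ hP.posSemidef.1.eigenvalues) *
    (star hP.posSemidef.1.eigenvectorUnitary : Matrix (Fin n) (Fin n) ℝ)

/-- Squared Frobenius norm of a real matrix. -/
noncomputable def frobSq {n : ℕ} (M : Matrix (Fin n) (Fin n) ℝ) : ℝ := (M * Mᵀ).trace

/-! With `A = P0^{1/2}`, `S = (A P1 A)^{1/2}` and `B = P1^{1/2}`, one has `B U = A⁻¹ S` and
`Q = 1 - A⁻¹ S A⁻¹`, so `Q A = A - A⁻¹ S = A - B U` while `A Q = A - S A⁻¹` is its transpose.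
Hence `Q P0 Q = (Q A)(A Q) = (A - B U)(A - B U)ᵀ` already as matrices, and taking traces gives
the claim. -/

section SymmetricConjugation

variable {m R : Type*} [Fintype m] [DecidableEq m] [CommRing R] {A S P : Matrix m m R}

lemma one_sub_inv_mul_mul_inv_mul (hA : IsUnit A.det) :
    (1 - A⁻¹ * S * A⁻¹) * A = A - A⁻¹ * S := by
  rw [Matrix.sub_mul, Matrix.one_mul, Matrix.mul_assoc, nonsing_inv_mul _ hA, Matrix.mul_one]

lemma mul_one_sub_inv_mul_mul_inv (hA : IsUnit A.det) :
    A * (1 - A⁻¹ * S * A⁻¹) = A - S * A⁻¹ := by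
  rw [Matrix.mul_sub, Matrix.mul_one, ← Matrix.mul_assoc, ← Matrix.mul_assoc,
    mul_nonsing_inv _ hA, Matrix.one_mul]

lemma one_sub_inv_mul_mul_inv_conj (hA : IsUnit A.det) (hAt : Aᵀ = A) (hSt : Sᵀ = S)
    (hP : A * A = P) :
    (1 - A⁻¹ * S * A⁻¹) * P * (1 - A⁻¹ * S * A⁻¹) = (A - A⁻¹ * S) * (A - A⁻¹ * S)ᵀ := by
  have hT : (A - A⁻¹ * S)ᵀ = A - S * A⁻¹ := by
    rw [transpose_sub, transpose_mul, transpose_nonsing_inv, hAt, hSt]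
  calc (1 - A⁻¹ * S * A⁻¹) * P * (1 - A⁻¹ * S * A⁻¹)
      = ((1 - A⁻¹ * S * A⁻¹) * A) * (A * (1 - A⁻¹ * S * A⁻¹)) := by
        rw [← hP]; simp only [Matrix.mul_assoc]
    _ = (A - A⁻¹ * S) * (A - A⁻¹ * S)ᵀ := by
        rw [one_sub_inv_mul_mul_inv_mul hA, mul_one_sub_inv_mul_mul_inv hA, hT]

end SymmetricConjugation

section Sqrtm

variable {n : ℕ} {P : Matrix (Fin n) (Fin n) ℝ}

lemma sqrtm_mul_sqrtm (hP : P.PosDef) : sqrtm hP * sqrtm hP = P := by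
  set V := hP.posSemidef.1.eigenvectorUnitary
  set d : Fin n → ℝ := (↑) ∘ (√·) ∘ hP.posSemidef.1.eigenvalues
  have hV : (star V : Matrix (Fin n) (Fin n) ℝ) * V.1 = 1 := Unitary.star_mul_self_of_mem V.2
  have hd : diagonal d * diagonal d =
      diagonal (RCLike.ofReal ∘ hP.posSemidef.1.eigenvalues : Fin n → ℝ) := by
    rw [diagonal_mul_diagonal]
    congr 1
    funext i
    simp [d, Real.mul_self_sqrt (hP.posSemidef.eigenvalues_nonneg i)]
  conv_rhs => rw [hP.posSemidef.1.spectral_theorem]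
  rw [Unitary.conjStarAlgAut_apply, sqrtm, ← hd]
  simp only [Matrix.mul_assoc]
  rw [← Matrix.mul_assoc _ _ (diagonal _ * _), hV, Matrix.one_mul]

lemma transpose_sqrtm (hP : P.PosDef) : (sqrtm hP)ᵀ = sqrtm hP := by
  simp [sqrtm, transpose_mul, star_eq_conjTranspose, conjTranspose_eq_transpose_of_trivial,
    Matrix.mul_assoc]

lemma isUnit_det_sqrtm (hP : P.PosDef) : IsUnit (sqrtm hP).det := by
  have h : IsUnit (sqrtm hP * sqrtm hP).det := by
    rw [sqrtm_mul_sqrtm hP]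
    exact (isUnit_iff_isUnit_det P).mp hP.isUnit
  rw [det_mul] at h
  exact isUnit_of_mul_isUnit_left h

end Sqrtm

theorem stmt_5 {n : ℕ} {P0 P1 : Matrix (Fin n) (Fin n) ℝ}
    (hP0 : P0.PosDef) (hP1 : P1.PosDef)
    (hS : (sqrtm hP0 * P1 * sqrtm hP0).PosDef)
    (U : Matrix (Fin n) (Fin n) ℝ)
    (hU : U = (sqrtm hP1)⁻¹ * (sqrtm hP0)⁻¹ * sqrtm hS)
    (Q : Matrix (Fin n) (Fin n) ℝ)
    (hQ : Q = 1 - (sqrtm hP0)⁻¹ * sqrtm hS * (sqrtm hP0)⁻¹) :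
    (Q * P0 * Q).trace = frobSq (sqrtm hP0 - sqrtm hP1 * U) := by
  have hBU : sqrtm hP1 * U = (sqrtm hP0)⁻¹ * sqrtm hS := by
    rw [hU, ← Matrix.mul_assoc, ← Matrix.mul_assoc, mul_nonsing_inv _ (isUnit_det_sqrtm hP1),
      Matrix.one_mul]
  rw [hQ, hBU, frobSq, one_sub_inv_mul_mul_inv_conj (isUnit_det_sqrtm hP0) (transpose_sqrtm hP0)
    (transpose_sqrtm hS) (sqrtm_mul_sqrtm hP0)]
end

section
/- Given SPD matrices P0, P1, the equation exp(-P0 Π) P0 exp(-Π P0) = P1 has the unique symmetric solution Π = -(1/2) P0^{-1/2} log(P0^{-1/2} P1 P0^{-1/2}) P0^{-1/2}. -/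
open Matrix

/-! Writing `P0 = S * S` with `S = sqrtm hP0` symmetric and invertible, conjugation by `S` turns
the left-hand side into `S * exp (-2 • (S * Π * S)) * S`. The equation thus says
`exp (-2 • (S * Π * S)) = S⁻¹ * P1 * S⁻¹ = exp L`, and since `exp` is injective on symmetric
matrices (the continuous functional calculus logarithm inverts it), `Π` is forced to be
`-(1/2) • (S⁻¹ * L * S⁻¹)`. -/

namespace Matrix

variable {m : Type*} [Fintype m] [DecidableEq m]

omit [DecidableEq m] in
lemma IsSymm.mul_mul_of_isSymm {α : Type*} [CommSemiring α] {A B : Matrix m m α}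
    (hA : A.IsSymm) (hB : B.IsSymm) : (B * A * B).IsSymm := by
  simp only [IsSymm, transpose_mul, hA.eq, hB.eq, Matrix.mul_assoc]

lemma mul_mul_eq_iff_eq_inv_mul_mul {α : Type*} [CommRing α] {S A B : Matrix m m α}
    (hS : IsUnit S) : S * A * S = B ↔ A = S⁻¹ * B * S⁻¹ := by
  have hdet := (isUnit_iff_isUnit_det S).1 hS
  constructor <;> rintro rfl <;>
    simp only [Matrix.mul_assoc, nonsing_inv_mul_cancel_left _ _ hdet,
      mul_nonsing_inv_cancel_left _ _ hdet, mul_nonsing_inv _ hdet, nonsing_inv_mul _ hdet,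
      Matrix.mul_one]

lemma exp_neg_mul_mul_exp_neg_mul_of_mul_self {S : Matrix m m ℝ} (hS : IsUnit S)
    (X : Matrix m m ℝ) :
    NormedSpace.exp (-(S * S * X)) * (S * S) * NormedSpace.exp (-(X * (S * S))) =
      S * NormedSpace.exp ((-2 : ℝ) • (S * X * S)) * S := by
  have hdet := (isUnit_iff_isUnit_det S).1 hS
  set Y := S * X * S
  have hleft : -(S * S * X) = S * -Y * S⁻¹ := by
    simp only [Y, Matrix.mul_neg, Matrix.neg_mul, Matrix.mul_assoc,
      mul_nonsing_inv _ hdet, Matrix.mul_one]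
  have hright : -(X * (S * S)) = S⁻¹ * -Y * S := by
    simp only [Y, Matrix.mul_neg, Matrix.neg_mul, ← Matrix.mul_assoc,
      nonsing_inv_mul _ hdet, Matrix.one_mul]
  have htwice : (-2 : ℝ) • Y = -Y + -Y := by module
  rw [hleft, hright, exp_conj S _ hS, exp_conj' S _ hS, htwice,
    exp_add_of_commute _ _ (Commute.refl _)]
  simp only [Matrix.mul_assoc, mul_nonsing_inv_cancel_left _ _ hdet,
    nonsing_inv_mul_cancel_left _ _ hdet]

lemma exp_inj_of_isSymm {A B : Matrix m m ℝ} (hA : A.IsSymm) (hB : B.IsSymm) :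
    NormedSpace.exp A = NormedSpace.exp B ↔ A = B := by
  -- `CFC.log` needs the C⋆-algebra structure given by the `L²` operator norm
  let : NormedRing (Matrix m m ℝ) := Matrix.instL2OpNormedRing
  let : NormedAlgebra ℝ (Matrix m m ℝ) := Matrix.instL2OpNormedAlgebra
  refine ⟨fun h => ?_, congrArg _⟩
  rw [← CFC.log_exp A (isHermitian_iff_isSymm.2 hA), h,
    CFC.log_exp B (isHermitian_iff_isSymm.2 hB)]

theorem exp_neg_mul_mul_exp_neg_mul_eq_iff {S L X : Matrix m m ℝ} (hS : IsUnit S)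
    (hSsymm : S.IsSymm) (hL : L.IsSymm) (hX : X.IsSymm) :
    NormedSpace.exp (-(S * S * X)) * (S * S) * NormedSpace.exp (-(X * (S * S))) =
        S * NormedSpace.exp L * S ↔
      X = -(1 / 2 : ℝ) • (S⁻¹ * L * S⁻¹) := by
  have hY : ((-2 : ℝ) • (S * X * S)).IsSymm := (hX.mul_mul_of_isSymm hSsymm).smul _
  rw [exp_neg_mul_mul_exp_neg_mul_of_mul_self hS, hS.mul_left_inj, hS.mul_right_inj,
    exp_inj_of_isSymm hY hL, ← eq_inv_smul_iff₀ (by norm_num), mul_mul_eq_iff_eq_inv_mul_mul hS,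
    Matrix.mul_smul, Matrix.smul_mul]
  norm_num

end Matrix

lemma isSymm_sqrtm {n : ℕ} {P : Matrix (Fin n) (Fin n) ℝ} (hP : P.PosDef) : (sqrtm hP).IsSymm :=
  isHermitian_iff_isSymm.1 <| isHermitian_mul_mul_conjTranspose _ <|
    isHermitian_diagonal_of_self_adjoint _ (IsSelfAdjoint.all _)

lemma sqrtm_mul_self {n : ℕ} {P : Matrix (Fin n) (Fin n) ℝ} (hP : P.PosDef) :
    sqrtm hP * sqrtm hP = P := by
  have hU := Unitary.star_mul_self_of_mem hP.posSemidef.1.eigenvectorUnitary.2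
  conv_rhs => rw [hP.posSemidef.1.spectral_theorem]
  rw [Unitary.conjStarAlgAut_apply, sqrtm]
  simp only [Matrix.mul_assoc]
  rw [← Matrix.mul_assoc (star _) _ _, hU, Matrix.one_mul,
    ← Matrix.mul_assoc (diagonal _) (diagonal _), diagonal_mul_diagonal]
  congr 3
  funext i
  simp [Real.mul_self_sqrt (hP.eigenvalues_pos i).le]

lemma isUnit_sqrtm {n : ℕ} {P : Matrix (Fin n) (Fin n) ℝ} (hP : P.PosDef) : IsUnit (sqrtm hP) := by
  have hdet : (sqrtm hP).det * (sqrtm hP).det = P.det := by rw [← det_mul, sqrtm_mul_self]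
  refine (isUnit_iff_isUnit_det _).2 (IsUnit.mk0 _ fun h => ?_)
  rw [h, zero_mul] at hdet
  exact hP.det_pos.ne' hdet.symm

theorem stmt_16_general {n : ℕ} {P0 P1 : Matrix (Fin n) (Fin n) ℝ}
    (hP0 : P0.PosDef)
    (L : Matrix (Fin n) (Fin n) ℝ) (hL : L.IsSymm)
    (hexpL : NormedSpace.exp L = (sqrtm hP0)⁻¹ * P1 * (sqrtm hP0)⁻¹)
    (Pi0 : Matrix (Fin n) (Fin n) ℝ)
    (hPi0 : Pi0 = -(1 / 2 : ℝ) • ((sqrtm hP0)⁻¹ * L * (sqrtm hP0)⁻¹)) :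
    (Pi0.IsSymm ∧
      NormedSpace.exp (-(P0 * Pi0)) * P0 * NormedSpace.exp (-(Pi0 * P0)) = P1) ∧
    ∀ Pi1 : Matrix (Fin n) (Fin n) ℝ, Pi1.IsSymm →
      NormedSpace.exp (-(P0 * Pi1)) * P0 * NormedSpace.exp (-(Pi1 * P0)) = P1 →
      Pi1 = Pi0 := by
  set S := sqrtm hP0
  have hS : IsUnit S := isUnit_sqrtm hP0
  have hSsymm : S.IsSymm := isSymm_sqrtm hP0
  have hP1S : P1 = S * NormedSpace.exp L * S := by
    rw [hexpL, (mul_mul_eq_iff_eq_inv_mul_mul hS).2 rfl]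
  have hPi0symm : Pi0.IsSymm := hPi0 ▸ (hL.mul_mul_of_isSymm hSsymm.inv).smul _
  have hsolve (X : Matrix (Fin n) (Fin n) ℝ) (hX : X.IsSymm) :=
    exp_neg_mul_mul_exp_neg_mul_eq_iff hS hSsymm hL hX
  rw [← sqrtm_mul_self hP0, hP1S]
  exact ⟨⟨hPi0symm, (hsolve Pi0 hPi0symm).2 hPi0⟩,
    fun Pi1 hPi1 h => ((hsolve Pi1 hPi1).1 h).trans hPi0.symm⟩

theorem stmt_16 {n : ℕ} {P0 P1 : Matrix (Fin n) (Fin n) ℝ}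
    (hP0 : P0.PosDef) (hP1 : P1.PosDef)
    (L : Matrix (Fin n) (Fin n) ℝ) (hL : L.IsSymm)
    (hexpL : NormedSpace.exp L = (sqrtm hP0)⁻¹ * P1 * (sqrtm hP0)⁻¹)
    (Pi0 : Matrix (Fin n) (Fin n) ℝ)
    (hPi0 : Pi0 = -(1 / 2 : ℝ) • ((sqrtm hP0)⁻¹ * L * (sqrtm hP0)⁻¹)) :
    (Pi0.IsSymm ∧
      NormedSpace.exp (-(P0 * Pi0)) * P0 * NormedSpace.exp (-(Pi0 * P0)) = P1) ∧
    ∀ Pi1 : Matrix (Fin n) (Fin n) ℝ, Pi1.IsSymm →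
      NormedSpace.exp (-(P0 * Pi1)) * P0 * NormedSpace.exp (-(Pi1 * P0)) = P1 →
      Pi1 = Pi0 :=
  stmt_16_general hP0 L hL hexpL Pi0 hPi0
end
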